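/- Let S_Λ = {χ ∈ S^♮ : χ_{2i-1} = χ_{2i} for all i = 1,...,24} and let D_Λ = S_Λ^⊥ ⊆ F_2^48 be its dual code. Then the codewords of D_Λ of Hamming weight 2 are exactly the 24 words ξ_{2i-1} + ξ_{2i} = (0^{2i-2} 1 1 0^{48-2i}), i = 1,...,24. -/
import Mathlib


/-- The all-ones word `(1^16)`. -/
def w16All : Fin 16 → ZMod 2 := fun _ => 1

/-- The word `(0^8 1^8)`. -/
def w16Half : Fin 16 → ZMod 2 := fun i => if 8 ≤ i.val then 1 else 0

/-- The word `(0^4 1^4 0^4 1^4)`. -/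
def w16Quarter : Fin 16 → ZMod 2 := fun i => if 4 ≤ i.val % 8 then 1 else 0

/-- The word `(0^2 1^2)` repeated 4 times. -/
def w16Eighth : Fin 16 → ZMod 2 := fun i => if 2 ≤ i.val % 4 then 1 else 0

/-- The word `(01)` repeated 8 times. -/
def w16Alt : Fin 16 → ZMod 2 := fun i => if 1 ≤ i.val % 2 then 1 else 0

/-- The code `S_{E8}`: the binary linear code of length 16 spanned by
`(1^16)`, `(0^8 1^8)`, `(0^4 1^4 0^4 1^4)`, `((0^2 1^2)^4)` and `((01)^8)`. -/
def SE8 : Submodule (ZMod 2) (Fin 16 → ZMod 2) :=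
  Submodule.span (ZMod 2) {w16All, w16Half, w16Quarter, w16Eighth, w16Alt}

/-- The word of length 48 which is `1` exactly on the `b`-th block of 16
coordinates (so `blockOnes 0 = (1^16,0^16,0^16)` etc.). -/
def blockOnes (b : ℕ) : Fin 48 → ZMod 2 := fun j => if j.val / 16 = b then 1 else 0

/-- The length-48 word `(α, α, α)` repeating a length-16 word `α` on each of the
three blocks. -/
def tripleRep (α : Fin 16 → ZMod 2) : Fin 48 → ZMod 2 :=
  fun j => α ⟨j.val % 16, Nat.mod_lt _ (by norm_num)⟩

/-- The moonshine code `S^♮`: the binary linear code of length 48 spanned by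
`(1^16,0^16,0^16)`, `(0^16,1^16,0^16)`, `(0^16,0^16,1^16)` and all `(α,α,α)`
with `α ∈ S_{E8}`. -/
def Snat : Submodule (ZMod 2) (Fin 48 → ZMod 2) :=
  Submodule.span (ZMod 2)
    ({blockOnes 0, blockOnes 1, blockOnes 2} ∪ {w | ∃ α ∈ SE8, w = tripleRep α})


/-- The dual code `C^⊥ = {γ : Σ_i γ_i α_i = 0 for all α ∈ C}` of a binary code `C`
of length `n`. -/
def dualCode {n : ℕ} (C : Set (Fin n → ZMod 2)) : Submodule (ZMod 2) (Fin n → ZMod 2) where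
  carrier := {c | ∀ a ∈ C, ∑ i, c i * a i = 0}
  add_mem' := by
    intro x y hx hy a ha
    have hx' := hx a ha
    have hy' := hy a ha
    simp only [Set.mem_setOf_eq, Pi.add_apply, add_mul, Finset.sum_add_distrib, hx', hy',
      add_zero]
  zero_mem' := by
    intro a ha
    simp
  smul_mem' := by
    intro m x hx a ha
    have hx' := hx a ha
    calc ∑ i, (m • x) i * a i = m * ∑ i, x i * a i := by
          simp [Finset.mul_sum, mul_assoc]
      _ = 0 := by rw [hx', mul_zero]

/-- The subcode `S_Λ` of `S^♮` consisting of the codewords that are constant on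
each of the 24 pairs `{2i-1, 2i}` of coordinates. -/
def SLambda : Set (Fin 48 → ZMod 2) :=
  {χ | χ ∈ Snat ∧
    ∀ i : Fin 24, χ ⟨2 * i.val, by omega⟩ = χ ⟨2 * i.val + 1, by omega⟩}

/-- The weight-2 word `ξ_{2i-1} + ξ_{2i} = (0^{2i-2} 1 1 0^{48-2i})`. -/
def pairWord (i : Fin 24) : Fin 48 → ZMod 2 :=
  fun j => if j.val = 2 * i.val ∨ j.val = 2 * i.val + 1 then 1 else 0

lemma sum_indicator (a b : Fin 48) (hab : a ≠ b) (χ : Fin 48 → ZMod 2) :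
    ∑ j, (if j = a ∨ j = b then (1 : ZMod 2) else 0) * χ j = χ a + χ b := by
  have key : ∀ j : Fin 48, (if j = a ∨ j = b then (1 : ZMod 2) else 0) * χ j
      = (if j = a then χ j else 0) + (if j = b then χ j else 0) := by
    intro j
    by_cases h1 : j = a <;> by_cases h2 : j = b <;> simp_all
  rw [Finset.sum_congr rfl fun j _ => key j, Finset.sum_add_distrib,
    Finset.sum_ite_eq' Finset.univ a χ, Finset.sum_ite_eq' Finset.univ b χ]
  simp

lemma tripleRep_mem (α : Fin 16 → ZMod 2)
    (hα : α ∈ ({w16All, w16Half, w16Quarter, w16Eighth, w16Alt} : Set (Fin 16 → ZMod 2))) :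
    tripleRep α ∈ Snat :=
  Submodule.subset_span (Set.mem_union_right _ ⟨α, Submodule.subset_span hα, rfl⟩)

lemma blockOnes0_mem : blockOnes 0 ∈ SLambda :=
  ⟨Submodule.subset_span (Set.mem_union_left _ (by simp)), by decide⟩

lemma blockOnes1_mem : blockOnes 1 ∈ SLambda :=
  ⟨Submodule.subset_span (Set.mem_union_left _ (by simp)), by decide⟩

lemma blockOnes2_mem : blockOnes 2 ∈ SLambda :=
  ⟨Submodule.subset_span (Set.mem_union_left _ (by simp)), by decide⟩

lemma half_mem : tripleRep w16Half ∈ SLambda :=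
  ⟨tripleRep_mem _ (by simp), by decide⟩

lemma quarter_mem : tripleRep w16Quarter ∈ SLambda :=
  ⟨tripleRep_mem _ (by simp), by decide⟩

lemma eighth_mem : tripleRep w16Eighth ∈ SLambda :=
  ⟨tripleRep_mem _ (by simp), by decide⟩

lemma sep : ∀ a b : Fin 48,
    blockOnes 0 a = blockOnes 0 b → blockOnes 1 a = blockOnes 1 b →
    blockOnes 2 a = blockOnes 2 b →
    tripleRep w16Half a = tripleRep w16Half b →
    tripleRep w16Quarter a = tripleRep w16Quarter b →
    tripleRep w16Eighth a = tripleRep w16Eighth b →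
    a.val / 2 = b.val / 2 := by decide

lemma pairWord_norm : ∀ i : Fin 24, hammingNorm (pairWord i) = 2 := by decide

/-- The codewords of Hamming weight 2 of the dual code `D_Λ = S_Λ^⊥` are exactly
the 24 words `ξ_{2i-1} + ξ_{2i}`, `i = 1, …, 24`. -/
theorem DLambda_weight_two_words :
    {w | w ∈ dualCode SLambda ∧ hammingNorm w = 2} =
      {w | ∃ i : Fin 24, w = pairWord i} := by
  have hone : ∀ x : ZMod 2, x ≠ 0 → x = 1 := by decide
  have haddself : ∀ x : ZMod 2, x + x = 0 := by decide
  have haddeq : ∀ x y : ZMod 2, x + y = 0 → x = y := by decide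
  ext w
  simp only [Set.mem_setOf_eq]
  constructor
  · rintro ⟨hdual, hnorm⟩
    unfold hammingNorm at hnorm
    obtain ⟨a, b, hab, hset⟩ := Finset.card_eq_two.mp hnorm
    have hiff : ∀ j, w j ≠ 0 ↔ (j = a ∨ j = b) := by
      intro j
      constructor
      · intro h
        have : j ∈ Finset.univ.filter fun j => w j ≠ 0 :=
          Finset.mem_filter.mpr ⟨Finset.mem_univ _, h⟩
        rw [hset] at this; simpa using this
      · intro h
        have : j ∈ ({a, b} : Finset (Fin 48)) := by simpa using h
        rw [← hset] at this
        exact (Finset.mem_filter.mp this).2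
    have hwj : ∀ j, w j = if j = a ∨ j = b then (1 : ZMod 2) else 0 := by
      intro j
      by_cases h : j = a ∨ j = b
      · simp only [h, if_true]
        exact hone _ ((hiff j).mpr h)
      · simp only [h, if_false]
        by_contra hne
        exact h ((hiff j).mp hne)
    have hsum : ∀ χ ∈ SLambda, χ a = χ b := by
      intro χ hχ
      have h0 := hdual χ hχ
      have h1 : ∑ j, (if j = a ∨ j = b then (1 : ZMod 2) else 0) * χ j = 0 :=
        (Finset.sum_congr rfl fun j _ => by rw [hwj j]).symm.trans h0
      rw [sum_indicator a b hab χ] at h1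
      exact haddeq _ _ h1
    have hv : a.val / 2 = b.val / 2 :=
      sep a b (hsum _ blockOnes0_mem) (hsum _ blockOnes1_mem) (hsum _ blockOnes2_mem)
        (hsum _ half_mem) (hsum _ quarter_mem) (hsum _ eighth_mem)
    have habv : a.val ≠ b.val := fun h => hab (Fin.ext h)
    have ha48 : a.val < 48 := a.isLt
    have hb48 : b.val < 48 := b.isLt
    refine ⟨⟨a.val / 2, by omega⟩, ?_⟩
    funext j
    rw [hwj j]
    show _ = if j.val = 2 * (a.val / 2) ∨ j.val = 2 * (a.val / 2) + 1 then (1 : ZMod 2) else 0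
    have hcond : (j = a ∨ j = b) ↔
        (j.val = 2 * (a.val / 2) ∨ j.val = 2 * (a.val / 2) + 1) := by
      rw [Fin.ext_iff, Fin.ext_iff]
      omega
    simp only [hcond]
  · rintro ⟨i, rfl⟩
    refine ⟨?_, pairWord_norm i⟩
    intro χ hχ
    have hi : 2 * i.val < 48 := by omega
    have hi' : 2 * i.val + 1 < 48 := by omega
    set a : Fin 48 := ⟨2 * i.val, hi⟩ with ha
    set b : Fin 48 := ⟨2 * i.val + 1, hi'⟩ with hb
    have hab : a ≠ b := by
      simp [ha, hb, Fin.ext_iff]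
    have heq : ∀ j, pairWord i j = (if j = a ∨ j = b then (1 : ZMod 2) else 0) := by
      intro j
      by_cases h1 : j.val = 2 * i.val <;> by_cases h2 : j.val = 2 * i.val + 1 <;>
        simp_all [pairWord, Fin.ext_iff, ha, hb]
    have h1 : ∑ j, pairWord i j * χ j
        = ∑ j, (if j = a ∨ j = b then (1 : ZMod 2) else 0) * χ j :=
      Finset.sum_congr rfl fun j _ => by rw [heq j]
    rw [h1, sum_indicator a b hab χ]
    have hpair := hχ.2 i
    have : χ a = χ b := hpair
    rw [this]
    exact haddself _
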